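/- arXiv:2503.09240 — 2 statements merged into one kernel-verified Lean document; each statement's English description precedes it below -/
import Mathlib

section
/- Let F be an SSAF of shape α with basement σ, and let F' be obtained by deleting all non-basement 1-cells, with β the shape of F'. Then for every pair ℓ < r with α_ℓ < α_r and β_ℓ ≥ β_r, we have α_ℓ = β_ℓ and σ(ℓ) > σ(r). -/
/-- A semi-skyline augmented filling of shape `α` with basement `σ`.
Entries are positive naturals; `σ i` as a value in `[n]` is `(σ i : ℕ) + 1`.
Conditions: positivity, basement, no descents, type A and type B inversion triples. -/
def IsSSAF (n : ℕ) (α : Fin n → ℕ) (σ : Equiv.Perm (Fin n)) (F : Fin n → ℕ → ℕ) : Prop :=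
  (∀ i j, j ≤ α i → 1 ≤ F i j) ∧
  (∀ i, F i 0 = (σ i : ℕ) + 1) ∧
  (∀ i j, j + 1 ≤ α i → F i (j + 1) ≤ F i j) ∧
  (∀ ℓ r : Fin n, ∀ i : ℕ, ℓ < r → α r ≤ α ℓ → i + 1 ≤ α r →
    ¬ (F ℓ (i + 1) ≤ F r (i + 1) ∧ F r (i + 1) ≤ F ℓ i)) ∧
  (∀ ℓ r : Fin n, ∀ i : ℕ, ℓ < r → α ℓ < α r → i ≤ α ℓ → i + 1 ≤ α r →
    ¬ (F r (i + 1) ≤ F ℓ i ∧ F ℓ i ≤ F r i))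

/-- The shape obtained by deleting all non-basement cells with entry `1`
(entries weakly decrease up a column, so such cells sit at the top):
`shapeDel α F i` is the number of non-basement cells of column `i` with entry at least `2`. -/
def shapeDel (n : ℕ) (α : Fin n → ℕ) (F : Fin n → ℕ → ℕ) (i : Fin n) : ℕ :=
  ((Finset.Icc 1 (α i)).filter (fun j => 2 ≤ F i j)).card

/-!
Columns of an SSAF weakly decrease, so the cells of entry at least `2` form an initial
segment of each column and `β i` is the height of that segment.

If `β ℓ < α ℓ`, then at `i = β ℓ + 1` both `F ℓ i` and `F r (i + 1)` equal `1` (the latter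
because `β r ≤ β ℓ`), and the type B triple at height `i` is not an inversion triple.
If `σ ℓ ≤ σ r`, the type B condition propagates `F ℓ i < F r (i + 1)` from the basement up
to `i = α ℓ`; hence `F r (α ℓ + 1) ≥ 2`, so `β r > α ℓ ≥ β ℓ`.
-/

lemma shapeDel_le (n : ℕ) (α : Fin n → ℕ) (F : Fin n → ℕ → ℕ) (i : Fin n) :
    shapeDel n α F i ≤ α i := by
  simpa [shapeDel] using (Finset.card_filter_le (Finset.Icc 1 (α i)) (fun j => 2 ≤ F i j))

namespace IsSSAF

variable {n : ℕ} {α : Fin n → ℕ} {σ : Equiv.Perm (Fin n)} {F : Fin n → ℕ → ℕ}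

lemma one_le (hF : IsSSAF n α σ F) {i : Fin n} {j : ℕ} (hj : j ≤ α i) : 1 ≤ F i j :=
  hF.1 i j hj

lemma basement (hF : IsSSAF n α σ F) (i : Fin n) : F i 0 = (σ i : ℕ) + 1 :=
  hF.2.1 i

lemma succ_le (hF : IsSSAF n α σ F) {i : Fin n} {j : ℕ} (hj : j + 1 ≤ α i) :
    F i (j + 1) ≤ F i j :=
  hF.2.2.1 i j hj

lemma typeB (hF : IsSSAF n α σ F) {ℓ r : Fin n} {i : ℕ} (hlr : ℓ < r) (hα : α ℓ < α r)
    (hiℓ : i ≤ α ℓ) (hir : i + 1 ≤ α r) : ¬ (F r (i + 1) ≤ F ℓ i ∧ F ℓ i ≤ F r i) :=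
  hF.2.2.2.2 ℓ r i hlr hα hiℓ hir

lemma antitoneOn (hF : IsSSAF n α σ F) (i : Fin n) : AntitoneOn (F i) (Set.Iic (α i)) :=
  antitoneOn_of_succ_le Set.ordConnected_Iic fun j _ _ hj => by
    rw [Order.succ_eq_add_one] at hj ⊢
    exact hF.succ_le hj

lemma le_shapeDel_of_two_le (hF : IsSSAF n α σ F) {i : Fin n} {j : ℕ} (hj : j ≤ α i)
    (h2 : 2 ≤ F i j) : j ≤ shapeDel n α F i := by
  have hsub : Finset.Icc 1 j ⊆ (Finset.Icc 1 (α i)).filter (fun k => 2 ≤ F i k) := by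
    intro k hk
    rw [Finset.mem_Icc] at hk
    rw [Finset.mem_filter, Finset.mem_Icc]
    exact ⟨⟨hk.1, hk.2.trans hj⟩,
      h2.trans (hF.antitoneOn i (hk.2.trans hj : k ≤ α i) hj hk.2)⟩
  simpa [shapeDel] using Finset.card_le_card hsub

lemma eq_one_of_shapeDel_lt (hF : IsSSAF n α σ F) {i : Fin n} {j : ℕ} (hj : j ≤ α i)
    (hlt : shapeDel n α F i < j) : F i j = 1 := by
  have := hF.one_le hj
  have := mt (hF.le_shapeDel_of_two_le hj) (by omega)
  omega

variable {ℓ r : Fin n}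

lemma eq_shapeDel_of_shapeDel_le (hF : IsSSAF n α σ F) (hlr : ℓ < r) (hα : α ℓ < α r)
    (hβ : shapeDel n α F r ≤ shapeDel n α F ℓ) : α ℓ = shapeDel n α F ℓ := by
  by_contra hne
  have hlt : shapeDel n α F ℓ < α ℓ := (shapeDel_le n α F ℓ).lt_of_ne' hne
  set i := shapeDel n α F ℓ + 1
  have hiℓ : i ≤ α ℓ := hlt
  have hir : i + 1 ≤ α r := by omega
  have hFℓ : F ℓ i = 1 := hF.eq_one_of_shapeDel_lt hiℓ (by omega)
  have hFr : F r (i + 1) = 1 := hF.eq_one_of_shapeDel_lt hir (by omega)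
  exact hF.typeB hlr hα hiℓ hir ⟨by omega, hFℓ ▸ hF.one_le (by omega)⟩

lemma lt_succ_of_basement_le (hF : IsSSAF n α σ F) (hlr : ℓ < r) (hα : α ℓ < α r)
    (hσ : (σ ℓ : ℕ) ≤ σ r) : ∀ i ≤ α ℓ, F ℓ i < F r (i + 1) := by
  intro i hi
  induction i with
  | zero =>
    have hbase : F ℓ 0 ≤ F r 0 := by rw [hF.basement, hF.basement]; omega
    exact lt_of_not_ge fun h => hF.typeB hlr hα hi (by omega) ⟨h, hbase⟩
  | succ i ih =>
    have hprev := ih (by omega)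
    have hdesc := hF.succ_le hi
    exact lt_of_not_ge fun h => hF.typeB hlr hα hi (by omega) ⟨h, by omega⟩

lemma basement_lt_of_shapeDel_le (hF : IsSSAF n α σ F) (hlr : ℓ < r) (hα : α ℓ < α r)
    (hβ : shapeDel n α F r ≤ shapeDel n α F ℓ) : (σ r : ℕ) < σ ℓ := by
  by_contra! hσ
  have htop := hF.lt_succ_of_basement_le hlr hα hσ (α ℓ) le_rfl
  have h2 : 2 ≤ F r (α ℓ + 1) := by have := hF.one_le (le_refl (α ℓ)); omega
  have := hF.le_shapeDel_of_two_le hα h2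
  have := shapeDel_le n α F ℓ
  omega

end IsSSAF

theorem stmt6 (n : ℕ) (α : Fin n → ℕ) (σ : Equiv.Perm (Fin n)) (F : Fin n → ℕ → ℕ)
    (hF : IsSSAF n α σ F) (ℓ r : Fin n) (hlr : ℓ < r) (hα : α ℓ < α r)
    (hβ : shapeDel n α F r ≤ shapeDel n α F ℓ) :
    α ℓ = shapeDel n α F ℓ ∧ (σ r : ℕ) < (σ ℓ : ℕ) :=
  ⟨hF.eq_shapeDel_of_shapeDel_le hlr hα hβ, hF.basement_lt_of_shapeDel_le hlr hα hβ⟩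
end

section
/- For a weak composition α of length n and σ ∈ S_n, 𝒜_α^σ(x) = Σ x_1^{|α|−|β_{(1)}|} x_2^{|β_{(2)}|−|β_{(1)}|} ⋯ x_n^{|β_{(n)}|−|β_{(n−1)}|}, where the sum ranges over saturated chains β_{(n)} ⋖_σ ⋯ ⋖_σ β_{(1)} ⋖_σ α in the poset ≤_σ (so β_{(i)} has length n−i, and β_{(n)} is the empty composition). -/
/-- `β` is `σ`-extendable to `α` (Definition 3.3). -/
def SigmaExtendable (n : ℕ) (σ : Equiv.Perm (Fin n)) (β α : Fin n → ℕ) : Prop :=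
  (∀ i, β i ≤ α i) ∧
  ∀ ℓ r : Fin n, ℓ < r →
    (α r ≤ α ℓ → β r ≤ β ℓ → α r ≤ β ℓ) ∧
    (α ℓ < α r → β ℓ < β r → α ℓ < β r) ∧
    (α r ≤ α ℓ → β ℓ < β r → α r = β r ∧ (σ ℓ : ℕ) < (σ r : ℕ)) ∧
    (α ℓ < α r → β r ≤ β ℓ → α ℓ = β ℓ ∧ (σ r : ℕ) < (σ ℓ : ℕ))

/-- The set of SSAFs of shape `α` with basement `σ`, with fillings normalized
to be `0` outside the cells of the diagram. -/
def SSAFSet (n : ℕ) (α : Fin n → ℕ) (σ : Equiv.Perm (Fin n)) : Set (Fin n → ℕ → ℕ) :=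
  {F | IsSSAF n α σ F ∧ ∀ i j, α i < j → F i j = 0}

/-- The permuted-basement Demazure atom `𝒜_α^σ`, as a sum of monomial weights
over SSAFs of shape `α` with basement `σ`; `x j` is the variable `x_j`. -/
noncomputable def atomSum (n : ℕ) (α : Fin n → ℕ) (σ : Equiv.Perm (Fin n)) (x : ℕ → ℝ) : ℝ :=
  ∑ᶠ F ∈ SSAFSet n α σ, ∏ i : Fin n, ∏ j ∈ Finset.Icc 1 (α i), x (F i j)

/-- Delete the value `1` from a permutation (here the `Fin` value `0`) and
shift the remaining values down, reindexing the positions accordingly. -/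
noncomputable def delPerm {m : ℕ} (τ : Equiv.Perm (Fin (m + 1))) : Equiv.Perm (Fin m) :=
  Equiv.ofBijective
    (fun i => (τ ((τ⁻¹ 0).succAbove i)).pred (fun h => by
      have : (τ⁻¹ 0).succAbove i = τ⁻¹ 0 := by
        have := congrArg τ.symm h
        simpa using this
      exact (τ⁻¹ 0).succAbove_ne i this))
    (Finite.injective_iff_bijective.mp (fun i j hij => by
      have h2 : τ ((τ⁻¹ 0).succAbove i) = τ ((τ⁻¹ 0).succAbove j) := by
        have := congrArg Fin.succ hij
        simpa [Fin.succ_pred] using this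
      exact Fin.succAbove_right_injective (τ.injective h2)))

/-- `delPerm`, extended to permutations of `Fin m` for all `m`. -/
noncomputable def delPerm' : {m : ℕ} → Equiv.Perm (Fin m) → Equiv.Perm (Fin (m - 1))
  | 0, τ => τ
  | _ + 1, τ => delPerm τ

/-- The permutation `σ_k` of Definition 3.8: obtained from `σ` by `k` times
deleting the value `1` and decrementing the remaining values. -/
noncomputable def sigmaAt {n : ℕ} (σ : Equiv.Perm (Fin n)) : (k : ℕ) → Equiv.Perm (Fin (n - k))
  | 0 => σ
  | k + 1 => delPerm' (sigmaAt σ k)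

/-- The covering relation at matching lengths: `b ⋖ a` iff inserting a zero part
into `b` at position `τ⁻¹(1)` gives a composition `τ`-extendable to `a`. -/
def CovStep {m : ℕ} (τ : Equiv.Perm (Fin (m + 1))) (b : Fin m → ℕ)
    (a : Fin (m + 1) → ℕ) : Prop :=
  SigmaExtendable (m + 1) τ ((τ⁻¹ 0).insertNth 0 b) a

/-- Saturated chains `β_(n) ⋖_σ ⋯ ⋖_σ β_(1) ⋖_σ α` in the poset `≤_σ`,
encoded as functions giving the composition of each length `ℓ ≤ n`
(and junk value `0` above `n`). -/
def ChainSet (n : ℕ) (σ : Equiv.Perm (Fin n)) (α : Fin n → ℕ) :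
    Set ((ℓ : ℕ) → Fin ℓ → ℕ) :=
  {c | (∀ i : Fin n, c n i = α i) ∧ (∀ ℓ, n < ℓ → ∀ i, c ℓ i = 0) ∧
    ∀ ℓ, (hℓ : ℓ + 1 ≤ n) →
      CovStep ((finCongr (Nat.sub_sub_self hℓ)).permCongr (sigmaAt σ (n - (ℓ + 1))))
        (c ℓ) (c (ℓ + 1))}

open Finset

section FibredSum

variable {α β γ M : Type*} {S : Set α} {B : Set β} {T : β → Set γ} {φ : α → β × γ}

lemma finite_fibrePairs (hB : B.Finite) (hT : ∀ b, (T b).Finite) :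
    {q : β × γ | q.1 ∈ B ∧ q.2 ∈ T q.1}.Finite :=
  (hB.prod (hB.biUnion fun b _ => hT b)).subset fun _ hq => ⟨hq.1, Set.mem_biUnion hq.1 hq.2⟩

lemma finite_of_bijOn_fibrePairs (hφ : S.BijOn φ {q | q.1 ∈ B ∧ q.2 ∈ T q.1})
    (hB : B.Finite) (hT : ∀ b, (T b).Finite) : S.Finite :=
  Set.Finite.of_finite_image (hφ.image_eq ▸ finite_fibrePairs hB hT) hφ.injOn

lemma finsum_mem_eq_finsum_mem_mul_finsum_mem [CommSemiring M]
    (hφ : S.BijOn φ {q | q.1 ∈ B ∧ q.2 ∈ T q.1}) (hB : B.Finite) (hT : ∀ b, (T b).Finite)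
    {w : α → M} {u : β → M} {v : β → γ → M} (hw : ∀ a ∈ S, w a = u (φ a).1 * v (φ a).1 (φ a).2) :
    ∑ᶠ a ∈ S, w a = ∑ᶠ b ∈ B, u b * ∑ᶠ c ∈ T b, v b c := by
  have hP := finite_fibrePairs hB hT
  rw [finsum_mem_eq_of_bijOn (g := fun q => u q.1 * v q.1 q.2) φ hφ hw,
    finsum_mem_eq_finite_toFinset_sum _ hP,
    finsum_mem_eq_finite_toFinset_sum _ hB,
    sum_finset_product' _ hB.toFinset (fun b => (hT b).toFinset) (by simp)
      (f := fun b c => u b * v b c)]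
  refine sum_congr rfl fun b _ => ?_
  rw [finsum_mem_eq_finite_toFinset_sum _ (hT b), mul_sum]

end FibredSum

section Triples

variable {n : ℕ}

def RowsAntitone (α : Fin n → ℕ) (F : Fin n → ℕ → ℕ) : Prop :=
  ∀ i j, j + 1 ≤ α i → F i (j + 1) ≤ F i j

def NoTypeATriples (α : Fin n → ℕ) (F : Fin n → ℕ → ℕ) : Prop :=
  ∀ ℓ r : Fin n, ∀ i : ℕ, ℓ < r → α r ≤ α ℓ → i + 1 ≤ α r →
    ¬ (F ℓ (i + 1) ≤ F r (i + 1) ∧ F r (i + 1) ≤ F ℓ i)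

def NoTypeBTriples (α : Fin n → ℕ) (F : Fin n → ℕ → ℕ) : Prop :=
  ∀ ℓ r : Fin n, ∀ i : ℕ, ℓ < r → α ℓ < α r → i ≤ α ℓ → i + 1 ≤ α r →
    ¬ (F r (i + 1) ≤ F ℓ i ∧ F ℓ i ≤ F r i)

variable {α : Fin n → ℕ} {F : Fin n → ℕ → ℕ}

lemma RowsAntitone.le_of_le (hd : RowsAntitone α F) {i : Fin n} {j k : ℕ} (hjk : j ≤ k)
    (hk : k ≤ α i) : F i k ≤ F i j := by
  induction k, hjk using Nat.le_induction with
  | base => exact le_rfl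
  | succ k hjk ih => exact (hd i k hk).trans (ih (by omega))

variable {ℓ r : Fin n}

lemma NoTypeATriples.lt_of_base (hA : NoTypeATriples α F) (hd : RowsAntitone α F)
    (hlr : ℓ < r) (hα : α r ≤ α ℓ) (h0 : F r 0 < F ℓ 0) : ∀ j ≤ α r, F r j < F ℓ j := by
  intro j hj
  induction j with
  | zero => exact h0
  | succ j ih =>
    have := hA ℓ r j hlr hα hj
    have := hd r j hj
    have := ih (by omega)
    omega

lemma NoTypeBTriples.lt_succ_of_base (hB : NoTypeBTriples α F) (hd : RowsAntitone α F)
    (hlr : ℓ < r) (hα : α ℓ < α r) (h0 : F ℓ 0 ≤ F r 0) : ∀ j ≤ α ℓ, F ℓ j < F r (j + 1) := by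
  intro j hj
  induction j with
  | zero => have := hB ℓ r 0 hlr hα hj (by omega); omega
  | succ j ih =>
    have := hB ℓ r (j + 1) hlr hα hj (by omega)
    have := hd ℓ j hj
    have := ih (by omega)
    omega

lemma NoTypeATriples.lt_succ_of_top (hA : NoTypeATriples α F) (hd : RowsAntitone α F)
    (hlr : ℓ < r) (hα : α r ≤ α ℓ) {k : ℕ} (hk : k + 1 ≤ α r)
    (htop : F ℓ (k + 1) ≤ F r (k + 1)) : ∀ j ≤ k, F ℓ j < F r (j + 1) := by
  intro j hj
  induction hj using Nat.decreasingInduction with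
  | self => have := hA ℓ r k hlr hα hk; omega
  | of_succ j hj ih =>
    have := hA ℓ r j hlr hα (by omega)
    have := hd r (j + 1) (by omega)
    omega

lemma NoTypeBTriples.lt_of_top (hB : NoTypeBTriples α F) (hd : RowsAntitone α F)
    (hlr : ℓ < r) (hα : α ℓ < α r) {k : ℕ} (hk : k ≤ α ℓ) (hk' : k + 1 ≤ α r)
    (htop : F r (k + 1) ≤ F ℓ k) :
    ∀ j ≤ k, F r j < F ℓ j := by
  intro j hj
  induction hj using Nat.decreasingInduction with
  | self => have := hB ℓ r k hlr hα hk hk'; omega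
  | of_succ j hj ih =>
    have := hB ℓ r j hlr hα (by omega) (by omega)
    have := hd ℓ j (by omega)
    omega

end Triples

section RemoveOnes

variable {n : ℕ} {α β : Fin n → ℕ} {σ : Equiv.Perm (Fin n)} {F H : Fin n → ℕ → ℕ}

lemma IsSSAF.one_le_s14 (hF : IsSSAF n α σ F) (i : Fin n) (j : ℕ) (hj : j ≤ α i) : 1 ≤ F i j :=
  hF.1 i j hj

lemma IsSSAF.base (hF : IsSSAF n α σ F) (i : Fin n) : F i 0 = (σ i : ℕ) + 1 := hF.2.1 i

lemma IsSSAF.rowsAntitone (hF : IsSSAF n α σ F) : RowsAntitone α F := hF.2.2.1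

lemma IsSSAF.noTypeATriples (hF : IsSSAF n α σ F) : NoTypeATriples α F := hF.2.2.2.1

lemma IsSSAF.noTypeBTriples (hF : IsSSAF n α σ F) : NoTypeBTriples α F := hF.2.2.2.2

/-- What is left of an SSAF with basement `σ` after deleting its entries `1` and decrementing
the others: the basement entry of row `i` becomes `σ i`, so the row with `σ i = 0` is empty. -/
structure IsReducedFilling (σ : Equiv.Perm (Fin n)) (β : Fin n → ℕ) (H : Fin n → ℕ → ℕ) :
    Prop where
  base : ∀ i, H i 0 = σ i
  one_le_s14 : ∀ i j, 1 ≤ j → j ≤ β i → 1 ≤ H i j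
  eq_zero : ∀ i j, β i < j → H i j = 0
  rowsAntitone : RowsAntitone β H
  noTypeATriples : NoTypeATriples β H
  noTypeBTriples : NoTypeBTriples β H

def dropOnesShape (α : Fin n → ℕ) (F : Fin n → ℕ → ℕ) (i : Fin n) : ℕ :=
  Nat.findGreatest (fun j => 2 ≤ F i j) (α i)

def dropOnes (F : Fin n → ℕ → ℕ) : Fin n → ℕ → ℕ := fun i j => F i j - 1

def addOnes (α : Fin n → ℕ) (H : Fin n → ℕ → ℕ) : Fin n → ℕ → ℕ :=
  fun i j => if j ≤ α i then H i j + 1 else 0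

lemma dropOnesShape_le (i : Fin n) : dropOnesShape α F i ≤ α i := Nat.findGreatest_le _

lemma two_le_of_le_dropOnesShape (hF : F ∈ SSAFSet n α σ) {i : Fin n} {j : ℕ} (hj : 1 ≤ j)
    (hjβ : j ≤ dropOnesShape α F i) : 2 ≤ F i j :=
  (Nat.findGreatest_of_ne_zero (P := fun j => 2 ≤ F i j) rfl (Nat.lt_of_lt_of_le hj hjβ).ne').trans
    (hF.1.rowsAntitone.le_of_le hjβ (dropOnesShape_le i))

lemma eq_one_of_dropOnesShape_lt (hF : F ∈ SSAFSet n α σ) {i : Fin n} {j : ℕ}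
    (hj : dropOnesShape α F i < j) (hjα : j ≤ α i) : F i j = 1 := by
  have := Nat.findGreatest_is_greatest (P := fun j => 2 ≤ F i j) hj hjα
  have := hF.1.one_le_s14 i j hjα
  omega

variable {ℓ r : Fin n}

lemma le_dropOnesShape_of_le (hF : F ∈ SSAFSet n α σ) (hlr : ℓ < r) (hα : α r ≤ α ℓ) :
    α r ≤ dropOnesShape α F ℓ ∨ α r ≤ dropOnesShape α F r := by
  by_contra! h
  have h1 := eq_one_of_dropOnesShape_lt hF (i := ℓ) (j := α r) (by omega) hα
  have h2 := eq_one_of_dropOnesShape_lt hF (i := r) (j := α r) (by omega) le_rfl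
  have h3 := hF.1.one_le_s14 ℓ (α r - 1) (by omega)
  have := hF.1.noTypeATriples ℓ r (α r - 1) hlr hα (by omega)
  rw [Nat.sub_add_cancel (by omega)] at this
  omega

lemma lt_dropOnesShape_of_lt (hF : F ∈ SSAFSet n α σ) (hlr : ℓ < r) (hα : α ℓ < α r) :
    α ℓ < dropOnesShape α F r ∨ α ℓ ≤ dropOnesShape α F ℓ := by
  by_contra! h
  have h1 := eq_one_of_dropOnesShape_lt hF (i := r) (j := α ℓ + 1) (by omega) hα
  have h2 := eq_one_of_dropOnesShape_lt hF (i := ℓ) (j := α ℓ) h.2 le_rfl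
  have h3 := hF.1.one_le_s14 r (α ℓ) (by omega)
  have := hF.1.noTypeBTriples ℓ r (α ℓ) hlr hα le_rfl hα
  omega

lemma apply_lt_apply_succ_of_dropOnesShape_lt (hF : F ∈ SSAFSet n α σ) (hlr : ℓ < r)
    (hα : α r ≤ α ℓ) (hβ : dropOnesShape α F ℓ < α r) :
    ∀ j ≤ dropOnesShape α F ℓ, F ℓ j < F r (j + 1) := by
  refine hF.1.noTypeATriples.lt_succ_of_top hF.1.rowsAntitone hlr hα hβ ?_
  rw [eq_one_of_dropOnesShape_lt hF (by omega) (by omega)]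
  exact hF.1.one_le_s14 r _ hβ

lemma apply_lt_apply_of_dropOnesShape_le (hF : F ∈ SSAFSet n α σ) (hlr : ℓ < r)
    (hα : α ℓ < α r) (hβ : dropOnesShape α F r ≤ α ℓ) :
    ∀ j ≤ dropOnesShape α F r, F r j < F ℓ j := by
  refine hF.1.noTypeBTriples.lt_of_top hF.1.rowsAntitone hlr hα hβ (by omega) ?_
  rw [eq_one_of_dropOnesShape_lt hF (by omega) (by omega)]
  exact hF.1.one_le_s14 ℓ _ hβ

lemma sigmaExtendable_dropOnesShape (hF : F ∈ SSAFSet n α σ) :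
    SigmaExtendable n σ (dropOnesShape α F) α := by
  refine ⟨dropOnesShape_le, fun ℓ r hlr => ⟨fun hα hβ => ?_, fun hα hβ => ?_,
    fun hα hβ => ?_, fun hα hβ => ?_⟩⟩
  · have := le_dropOnesShape_of_le hF hlr hα
    omega
  · have := lt_dropOnesShape_of_lt hF hlr hα
    omega
  · have hmax := le_dropOnesShape_of_le hF hlr hα
    have hβr := dropOnesShape_le (α := α) (F := F) r
    have h01 := apply_lt_apply_succ_of_dropOnesShape_lt hF hlr hα (by omega) 0 (Nat.zero_le _)
    have h10 := hF.1.rowsAntitone r 0 (by omega)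
    have hℓ0 := hF.1.base ℓ
    have hr0 := hF.1.base r
    omega
  · have hmax := lt_dropOnesShape_of_lt hF hlr hα
    have hβℓ := dropOnesShape_le (α := α) (F := F) ℓ
    have h00 := apply_lt_apply_of_dropOnesShape_le hF hlr hα (by omega) 0 (Nat.zero_le _)
    have hℓ0 := hF.1.base ℓ
    have hr0 := hF.1.base r
    omega

lemma noTypeATriples_dropOnes (hF : F ∈ SSAFSet n α σ) :
    NoTypeATriples (dropOnesShape α F) (dropOnes F) := by
  intro ℓ r i hlr hβ hi ⟨h1, h2⟩
  simp only [dropOnes] at h1 h2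
  have hβℓ := dropOnesShape_le (α := α) (F := F) ℓ
  have hβr := dropOnesShape_le (α := α) (F := F) r
  have := two_le_of_le_dropOnesShape hF (i := ℓ) (j := i + 1) (by omega) (by omega)
  have := two_le_of_le_dropOnesShape hF (i := r) (j := i + 1) (by omega) hi
  have := hF.1.rowsAntitone ℓ i (by omega)
  rcases le_or_gt (α r) (α ℓ) with hα | hα
  · exact hF.1.noTypeATriples ℓ r i hlr hα (by omega) ⟨by omega, by omega⟩
  · have := apply_lt_apply_of_dropOnesShape_le hF hlr hα (by omega) (i + 1) hi
    omega

lemma noTypeBTriples_dropOnes (hF : F ∈ SSAFSet n α σ) :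
    NoTypeBTriples (dropOnesShape α F) (dropOnes F) := by
  intro ℓ r i hlr hβ hi hi' ⟨h1, h2⟩
  simp only [dropOnes] at h1 h2
  have hβℓ := dropOnesShape_le (α := α) (F := F) ℓ
  have hβr := dropOnesShape_le (α := α) (F := F) r
  have := two_le_of_le_dropOnesShape hF (i := r) (j := i + 1) (by omega) hi'
  have := hF.1.one_le_s14 ℓ i (by omega)
  have := hF.1.rowsAntitone r i (by omega)
  rcases lt_or_ge (α ℓ) (α r) with hα | hα
  · exact hF.1.noTypeBTriples ℓ r i hlr hα (by omega) (by omega) ⟨by omega, by omega⟩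
  · have := apply_lt_apply_succ_of_dropOnesShape_lt hF hlr hα (by omega) i hi
    omega

lemma isReducedFilling_dropOnes (hF : F ∈ SSAFSet n α σ) :
    IsReducedFilling σ (dropOnesShape α F) (dropOnes F) where
  base i := by
    have := hF.1.base i
    simp only [dropOnes]
    omega
  one_le_s14 i j hj hjβ := by
    have := two_le_of_le_dropOnesShape hF hj hjβ
    simp only [dropOnes]
    omega
  eq_zero i j hj := by
    simp only [dropOnes]
    rcases le_or_gt j (α i) with hjα | hjα
    · rw [eq_one_of_dropOnesShape_lt hF hj hjα]
    · rw [hF.2 i j hjα]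
  rowsAntitone i j hj :=
    Nat.sub_le_sub_right (hF.1.rowsAntitone i j (hj.trans (dropOnesShape_le i))) 1
  noTypeATriples := noTypeATriples_dropOnes hF
  noTypeBTriples := noTypeBTriples_dropOnes hF

lemma IsReducedFilling.apply_succ_le (hH : IsReducedFilling σ β H) (i : Fin n) (j : ℕ) :
    H i (j + 1) ≤ H i j := by
  rcases le_or_gt (j + 1) (β i) with hj | hj
  · exact hH.rowsAntitone i j hj
  · rw [hH.eq_zero i (j + 1) hj]
    exact Nat.zero_le _

lemma addOnes_of_le {i : Fin n} {j : ℕ} (hj : j ≤ α i) : addOnes α H i j = H i j + 1 :=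
  if_pos hj

lemma noTypeATriples_addOnes (hext : SigmaExtendable n σ β α) (hH : IsReducedFilling σ β H) :
    NoTypeATriples α (addOnes α H) := by
  intro ℓ r i hlr hα hi ⟨h1, h2⟩
  rw [addOnes_of_le (by omega), addOnes_of_le hi] at h1
  rw [addOnes_of_le hi, addOnes_of_le (by omega)] at h2
  rcases le_or_gt (β r) (β ℓ) with hβ | hβ
  · have := (hext.2 ℓ r hlr).1 hα hβ
    have := hH.one_le_s14 ℓ (i + 1) (by omega) (by omega)
    have hir : i + 1 ≤ β r := by
      by_contra
      have := hH.eq_zero r (i + 1) (by omega)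
      omega
    exact hH.noTypeATriples ℓ r i hlr hβ hir ⟨by omega, by omega⟩
  · obtain ⟨hαβ, hσ⟩ := (hext.2 ℓ r hlr).2.2.1 hα hβ
    have h0 : H ℓ 0 ≤ H r 0 := by
      rw [hH.base, hH.base]
      exact hσ.le
    rcases le_or_gt i (β ℓ) with hiℓ | hiℓ
    · have := hH.noTypeBTriples.lt_succ_of_base hH.rowsAntitone hlr hβ h0 i hiℓ
      omega
    · have := hH.eq_zero ℓ i hiℓ
      have := hH.one_le_s14 r (i + 1) (by omega) (by omega)
      omega

lemma noTypeBTriples_addOnes (hext : SigmaExtendable n σ β α) (hH : IsReducedFilling σ β H) :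
    NoTypeBTriples α (addOnes α H) := by
  intro ℓ r i hlr hα hi hi' ⟨h1, h2⟩
  rw [addOnes_of_le hi', addOnes_of_le hi] at h1
  rw [addOnes_of_le hi, addOnes_of_le (by omega)] at h2
  rcases lt_or_ge (β ℓ) (β r) with hβ | hβ
  · have := (hext.2 ℓ r hlr).2.1 hα hβ
    have := hH.one_le_s14 r (i + 1) (by omega) (by omega)
    have hiℓ : i ≤ β ℓ := by
      by_contra
      have := hH.eq_zero ℓ i (by omega)
      omega
    exact hH.noTypeBTriples ℓ r i hlr hβ hiℓ (by omega) ⟨by omega, by omega⟩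
  · obtain ⟨hαβ, hσ⟩ := (hext.2 ℓ r hlr).2.2.2 hα hβ
    have h0 : H r 0 < H ℓ 0 := by
      rw [hH.base, hH.base]
      exact hσ
    rcases le_or_gt i (β r) with hir | hir
    · have := hH.noTypeATriples.lt_of_base hH.rowsAntitone hlr hβ h0 i hir
      omega
    · have := hH.eq_zero r i hir
      have := hH.one_le_s14 ℓ i (by omega) (by omega)
      omega

lemma addOnes_mem_ssafSet (hext : SigmaExtendable n σ β α) (hH : IsReducedFilling σ β H) :
    addOnes α H ∈ SSAFSet n α σ := by
  refine ⟨⟨fun i j hj => ?_, fun i => ?_, fun i j hj => ?_, noTypeATriples_addOnes hext hH,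
    noTypeBTriples_addOnes hext hH⟩, fun i j hj => if_neg (by omega)⟩
  · rw [addOnes_of_le hj]
    omega
  · rw [addOnes_of_le (Nat.zero_le _), hH.base]
  · rw [addOnes_of_le hj, addOnes_of_le (by omega)]
    exact Nat.add_le_add_right (hH.apply_succ_le i j) 1

lemma dropOnesShape_addOnes (hβα : ∀ i, β i ≤ α i) (hH : IsReducedFilling σ β H) :
    dropOnesShape α (addOnes α H) = β := by
  funext i
  refine Nat.findGreatest_eq_iff.2 ⟨hβα i, fun hβ => ?_, fun j hj hjα => ?_⟩
  · rw [addOnes_of_le (hβα i)]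
    have := hH.one_le_s14 i (β i) (by omega) le_rfl
    omega
  · rw [addOnes_of_le hjα, hH.eq_zero i j hj]
    omega

lemma dropOnes_addOnes (hβα : ∀ i, β i ≤ α i) (hH : IsReducedFilling σ β H) :
    dropOnes (addOnes α H) = H := by
  funext i j
  simp only [dropOnes, addOnes]
  split_ifs with hj
  · rfl
  · exact (hH.eq_zero i j (by have := hβα i; omega)).symm

lemma addOnes_dropOnes (hF : F ∈ SSAFSet n α σ) : addOnes α (dropOnes F) = F := by
  funext i j
  simp only [addOnes, dropOnes]
  split_ifs with hj
  · have := hF.1.one_le_s14 i j hj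
    omega
  · exact (hF.2 i j (by omega)).symm

lemma prod_Icc_eq_pow_mul_prod_dropOnes {M : Type*} [CommMonoid M] (hF : F ∈ SSAFSet n α σ)
    (x : ℕ → M) (i : Fin n) :
    ∏ j ∈ Icc 1 (α i), x (F i j) =
      x 1 ^ (α i - dropOnesShape α F i) *
        ∏ j ∈ Icc 1 (dropOnesShape α F i), x (dropOnes F i j + 1) := by
  have hβ := dropOnesShape_le (α := α) (F := F) i
  have hIcc : ∀ k, Icc 1 k = Ioc 0 k := Icc_add_one_left_eq_Ioc 0
  rw [hIcc, hIcc, ← prod_Ioc_consecutive _ (Nat.zero_le _) hβ,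
    mul_comm, ← Nat.card_Ioc, ← prod_const]
  congr 1
  · refine prod_congr rfl fun j hj => ?_
    rw [mem_Ioc] at hj
    rw [eq_one_of_dropOnesShape_lt hF hj.1 hj.2]
  · refine prod_congr rfl fun j hj => ?_
    rw [mem_Ioc] at hj
    have := two_le_of_le_dropOnesShape hF hj.1 hj.2
    simp only [dropOnes]
    congr
    omega

lemma prod_prod_eq_pow_mul_prod_prod_dropOnes {M : Type*} [CommMonoid M]
    (hF : F ∈ SSAFSet n α σ) (x : ℕ → M) :
    ∏ i, ∏ j ∈ Icc 1 (α i), x (F i j) =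
      x 1 ^ (∑ i, α i - ∑ i, dropOnesShape α F i) *
        ∏ i, ∏ j ∈ Icc 1 (dropOnesShape α F i), x (dropOnes F i j + 1) := by
  rw [← sum_tsub_distrib _ fun i _ => dropOnesShape_le i, ← prod_pow_eq_pow_sum,
    ← prod_mul_distrib]
  exact prod_congr rfl fun i _ => prod_Icc_eq_pow_mul_prod_dropOnes hF x i

end RemoveOnes

section DeleteRow

variable {m : ℕ} {σ : Equiv.Perm (Fin (m + 1))} {b : Fin m → ℕ} {G : Fin m → ℕ → ℕ}
  {β : Fin (m + 1) → ℕ} {H : Fin (m + 1) → ℕ → ℕ}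

lemma delPerm_val_add_one (σ : Equiv.Perm (Fin (m + 1))) (i : Fin m) :
    (delPerm σ i : ℕ) + 1 = σ ((σ⁻¹ 0).succAbove i) := by
  have hne : σ ((σ⁻¹ 0).succAbove i) ≠ 0 := fun h =>
    Fin.succAbove_ne (σ⁻¹ 0) i (Equiv.Perm.eq_inv_iff_eq.2 h)
  rw [← Fin.val_succ]
  exact congrArg Fin.val (Fin.succ_pred _ hne)

lemma val_apply_inv_zero (σ : Equiv.Perm (Fin (m + 1))) : (σ (σ⁻¹ 0) : ℕ) = 0 := by
  simp

lemma rowsAntitone_insertNth {p : Fin (m + 1)} (hd : RowsAntitone b G) :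
    RowsAntitone (p.insertNth 0 b) (p.insertNth 0 G) := by
  intro r j hj
  rcases Fin.eq_self_or_eq_succAbove p r with rfl | ⟨i, rfl⟩
  · simp at hj
  · simp only [Fin.insertNth_apply_succAbove] at hj ⊢
    exact hd i j hj

lemma noTypeATriples_insertNth {p : Fin (m + 1)} (hA : NoTypeATriples b G) :
    NoTypeATriples (p.insertNth 0 b) (p.insertNth 0 G) := by
  intro ℓ r i hlr hβ hi
  rcases Fin.eq_self_or_eq_succAbove p r with rfl | ⟨r, rfl⟩
  · simp at hi
  rcases Fin.eq_self_or_eq_succAbove p ℓ with rfl | ⟨ℓ, rfl⟩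
  · simp only [Fin.insertNth_apply_succAbove, Fin.insertNth_apply_same] at hβ hi
    omega
  simp only [Fin.insertNth_apply_succAbove] at hβ hi ⊢
  exact hA ℓ r i (Fin.succAbove_lt_succAbove_iff.1 hlr) hβ hi

lemma noTypeBTriples_insertNth {p : Fin (m + 1)} (hpos : ∀ i j, j ≤ b i → 1 ≤ G i j)
    (hB : NoTypeBTriples b G) : NoTypeBTriples (p.insertNth 0 b) (p.insertNth 0 G) := by
  intro ℓ r i hlr hβ hi hi'
  rcases Fin.eq_self_or_eq_succAbove p r with rfl | ⟨r, rfl⟩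
  · simp at hβ
  rcases Fin.eq_self_or_eq_succAbove p ℓ with rfl | ⟨ℓ, rfl⟩
  · obtain rfl : i = 0 := by simpa using hi
    have := hpos r 1 (by simpa using hi')
    simp only [zero_add, Fin.insertNth_apply_succAbove, Fin.insertNth_apply_same, Pi.zero_apply]
    omega
  simp only [Fin.insertNth_apply_succAbove] at hβ hi hi' ⊢
  exact hB ℓ r i (Fin.succAbove_lt_succAbove_iff.1 hlr) hβ hi hi'

lemma isReducedFilling_insertNth (hG : G ∈ SSAFSet m b (delPerm σ)) :
    IsReducedFilling σ ((σ⁻¹ 0).insertNth 0 b) ((σ⁻¹ 0).insertNth 0 G) where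
  base r := by
    rcases Fin.eq_self_or_eq_succAbove (σ⁻¹ 0) r with rfl | ⟨i, rfl⟩
    · simp
    · simp only [Fin.insertNth_apply_succAbove, hG.1.base, delPerm_val_add_one]
  one_le_s14 r j hj hjβ := by
    rcases Fin.eq_self_or_eq_succAbove (σ⁻¹ 0) r with rfl | ⟨i, rfl⟩
    · simp only [Fin.insertNth_apply_same] at hjβ
      omega
    · simp only [Fin.insertNth_apply_succAbove] at hjβ ⊢
      exact hG.1.one_le_s14 i j hjβ
  eq_zero r j hj := by
    rcases Fin.eq_self_or_eq_succAbove (σ⁻¹ 0) r with rfl | ⟨i, rfl⟩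
    · simp
    · simp only [Fin.insertNth_apply_succAbove] at hj ⊢
      exact hG.2 i j hj
  rowsAntitone := rowsAntitone_insertNth hG.1.rowsAntitone
  noTypeATriples := noTypeATriples_insertNth hG.1.noTypeATriples
  noTypeBTriples := noTypeBTriples_insertNth hG.1.one_le_s14 hG.1.noTypeBTriples

lemma IsReducedFilling.removeNth_mem (hH : IsReducedFilling σ β H) :
    (σ⁻¹ 0).removeNth H ∈ SSAFSet m ((σ⁻¹ 0).removeNth β) (delPerm σ) := by
  simp only [SSAFSet, IsSSAF, Set.mem_ofPred_eq, Fin.removeNth_apply]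
  refine ⟨⟨fun i j hj => ?_, fun i => ?_, fun i j hj => hH.rowsAntitone _ j hj,
    fun ℓ r i hlr => hH.noTypeATriples _ _ i (Fin.strictMono_succAbove _ hlr),
    fun ℓ r i hlr => hH.noTypeBTriples _ _ i (Fin.strictMono_succAbove _ hlr)⟩,
    fun i j => hH.eq_zero _ j⟩
  · rcases j with _ | j
    · rw [hH.base, ← delPerm_val_add_one]
      omega
    · exact hH.one_le_s14 _ _ (by omega) hj
  · rw [hH.base, delPerm_val_add_one]

lemma IsReducedFilling.shape_eq_zero (hH : IsReducedFilling σ β H) {i : Fin (m + 1)}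
    (hi : (σ i : ℕ) = 0) : β i = 0 := by
  by_contra
  have := hH.one_le_s14 i 1 le_rfl (by omega)
  have h10 : H i 1 ≤ H i 0 := hH.apply_succ_le i 0
  rw [hH.base, hi] at h10
  omega

lemma IsReducedFilling.row_eq_zero (hH : IsReducedFilling σ β H) {i : Fin (m + 1)}
    (hi : (σ i : ℕ) = 0) : H i = 0 := by
  funext j
  rcases j with _ | j
  · rw [hH.base, hi, Pi.zero_apply]
  · exact hH.eq_zero i _ (by rw [hH.shape_eq_zero hi]; omega)

lemma insertNth_removeNth_of_apply_eq {X : Type*} {p : Fin (m + 1)} {f : Fin (m + 1) → X}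
    {a : X} (h : f p = a) : p.insertNth a (p.removeNth f) = f := by
  rw [Fin.insertNth_removeNth, Function.update_eq_self_iff, h]

lemma covStep_finite (σ : Equiv.Perm (Fin (m + 1))) (α : Fin (m + 1) → ℕ) :
    {b : Fin m → ℕ | CovStep σ b α}.Finite := by
  refine (Set.finite_Iic ((σ⁻¹ 0).removeNth α)).subset fun b hb => ?_
  rw [Set.mem_Iic]
  intro i
  have := hb.1 ((σ⁻¹ 0).succAbove i)
  rw [Fin.insertNth_apply_succAbove] at this
  exact this

theorem ssafSet_bijOn (α : Fin (m + 1) → ℕ) (σ : Equiv.Perm (Fin (m + 1))) :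
    Set.BijOn (fun F => ((σ⁻¹ 0).removeNth (dropOnesShape α F), (σ⁻¹ 0).removeNth (dropOnes F)))
      (SSAFSet (m + 1) α σ)
      {q | q.1 ∈ {b | CovStep σ b α} ∧ q.2 ∈ SSAFSet m q.1 (delPerm σ)} := by
  refine Set.InvOn.bijOn (f' := fun q => addOnes α ((σ⁻¹ 0).insertNth 0 q.2))
    ⟨fun F hF => ?_, fun q hq => ?_⟩ (fun F hF => ⟨?_, ?_⟩) (fun q hq => ?_)
  · have hH := isReducedFilling_dropOnes hF
    dsimp only
    rw [insertNth_removeNth_of_apply_eq (hH.row_eq_zero (val_apply_inv_zero σ)),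
      addOnes_dropOnes hF]
  · have hH := isReducedFilling_insertNth hq.2
    dsimp only
    rw [dropOnesShape_addOnes hq.1.1 hH, dropOnes_addOnes hq.1.1 hH, Fin.removeNth_insertNth,
      Fin.removeNth_insertNth]
  · have hH := isReducedFilling_dropOnes hF
    change SigmaExtendable _ _ ((σ⁻¹ 0).insertNth 0 ((σ⁻¹ 0).removeNth (dropOnesShape α F))) α
    rw [insertNth_removeNth_of_apply_eq (hH.shape_eq_zero (val_apply_inv_zero σ))]
    exact sigmaExtendable_dropOnesShape hF
  · exact (isReducedFilling_dropOnes hF).removeNth_mem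
  · exact addOnes_mem_ssafSet hq.1 (isReducedFilling_insertNth hq.2)

theorem ssafSet_finite : ∀ (n : ℕ) (α : Fin n → ℕ) (σ : Equiv.Perm (Fin n)),
    (SSAFSet n α σ).Finite
  | 0, _, _ => Set.toFinite _
  | m + 1, α, σ => finite_of_bijOn_fibrePairs (ssafSet_bijOn α σ) (covStep_finite σ α)
      fun b => ssafSet_finite m b (delPerm σ)

theorem atomSum_succ (α : Fin (m + 1) → ℕ) (σ : Equiv.Perm (Fin (m + 1))) (x : ℕ → ℝ) :
    atomSum (m + 1) α σ x =
      ∑ᶠ b ∈ {b | CovStep σ b α},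
        x 1 ^ (∑ i, α i - ∑ i, b i) * atomSum m b (delPerm σ) (fun k => x (k + 1)) := by
  unfold atomSum
  refine finsum_mem_eq_finsum_mem_mul_finsum_mem (ssafSet_bijOn α σ) (covStep_finite σ α)
    (fun b => ssafSet_finite m b (delPerm σ)) (u := fun b => x 1 ^ (∑ i, α i - ∑ i, b i))
    (v := fun b G => ∏ i, ∏ j ∈ Icc 1 (b i), x (G i j + 1)) fun F hF => ?_
  have hβ := (isReducedFilling_dropOnes hF).shape_eq_zero (val_apply_inv_zero σ)
  rw [prod_prod_eq_pow_mul_prod_prod_dropOnes hF,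
    Fin.sum_univ_succAbove (dropOnesShape α F) (σ⁻¹ 0),
    Fin.prod_univ_succAbove (fun i => ∏ j ∈ Icc 1 (dropOnesShape α F i), x (dropOnes F i j + 1))
      (σ⁻¹ 0), hβ]
  simp [Fin.removeNth_apply]

theorem atomSum_zero (α : Fin 0 → ℕ) (σ : Equiv.Perm (Fin 0)) (x : ℕ → ℝ) :
    atomSum 0 α σ x = 1 := by
  have hS : SSAFSet 0 α σ = Set.univ :=
    Set.eq_univ_of_forall fun F => ⟨⟨finZeroElim, finZeroElim, finZeroElim, finZeroElim,
      finZeroElim⟩, finZeroElim⟩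
  simp [atomSum, hS, finsum_unique]

end DeleteRow

section Chains

variable {m : ℕ}

lemma finCongr_permCongr_eq_of_heq {a b : ℕ} (h : a = b) {τ : Equiv.Perm (Fin a)}
    {τ' : Equiv.Perm (Fin b)} (hτ : τ ≍ τ') : (finCongr h).permCongr τ = τ' := by
  subst h
  cases hτ
  ext
  simp

lemma heq_finCongr_permCongr {a b : ℕ} (h : a = b) (τ : Equiv.Perm (Fin a)) :
    τ ≍ (finCongr h).permCongr τ := by
  subst h
  exact heq_of_eq (finCongr_permCongr_eq_of_heq rfl HEq.rfl).symm

lemma delPerm'_heq {a b : ℕ} (h : a = b) {τ : Equiv.Perm (Fin a)} {τ' : Equiv.Perm (Fin b)}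
    (hτ : τ ≍ τ') : delPerm' τ ≍ delPerm' τ' := by
  subst h
  cases hτ
  rfl

lemma sigmaAt_succ_heq (σ : Equiv.Perm (Fin (m + 1))) :
    ∀ k, sigmaAt σ (k + 1) ≍ sigmaAt (delPerm σ) k
  | 0 => HEq.rfl
  | k + 1 => delPerm'_heq (Nat.add_sub_add_right m 1 k) (sigmaAt_succ_heq σ k)

lemma permCongr_sigmaAt_delPerm (σ : Equiv.Perm (Fin (m + 1))) {ℓ : ℕ} (hℓ : ℓ + 1 ≤ m)
    (h₁ : m + 1 - (m + 1 - (ℓ + 1)) = ℓ + 1) (h₂ : m - (m - (ℓ + 1)) = ℓ + 1) :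
    (finCongr h₁).permCongr (sigmaAt σ (m + 1 - (ℓ + 1))) =
      (finCongr h₂).permCongr (sigmaAt (delPerm σ) (m - (ℓ + 1))) := by
  refine finCongr_permCongr_eq_of_heq h₁ ?_
  have e : m + 1 - (ℓ + 1) = m - (ℓ + 1) + 1 := by omega
  exact (congr_arg_heq (sigmaAt σ) e).trans <|
    (sigmaAt_succ_heq σ _).trans (heq_finCongr_permCongr h₂ _)

lemma permCongr_sigmaAt_sub_self (σ : Equiv.Perm (Fin (m + 1)))
    (h : m + 1 - (m + 1 - (m + 1)) = m + 1) :
    (finCongr h).permCongr (sigmaAt σ (m + 1 - (m + 1))) = σ :=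
  finCongr_permCongr_eq_of_heq h (congr_arg_heq (sigmaAt σ) (Nat.sub_self _))

def truncChain (m : ℕ) (c : (ℓ : ℕ) → Fin ℓ → ℕ) : (ℓ : ℕ) → Fin ℓ → ℕ :=
  fun ℓ => if ℓ ≤ m then c ℓ else 0

lemma truncChain_of_le {c : (ℓ : ℕ) → Fin ℓ → ℕ} {ℓ : ℕ} (h : ℓ ≤ m) :
    truncChain m c ℓ = c ℓ :=
  if_pos h

lemma truncChain_of_lt {c : (ℓ : ℕ) → Fin ℓ → ℕ} {ℓ : ℕ} (h : m < ℓ) :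
    truncChain m c ℓ = 0 :=
  if_neg (by omega)

lemma covStep_of_mem_chainSet {σ : Equiv.Perm (Fin (m + 1))} {α : Fin (m + 1) → ℕ}
    {c : (ℓ : ℕ) → Fin ℓ → ℕ} (hc : c ∈ ChainSet (m + 1) σ α) : CovStep σ (c m) α := by
  have h := hc.2.2 m le_rfl
  rwa [permCongr_sigmaAt_sub_self, show c (m + 1) = α from funext hc.1] at h

lemma truncChain_mem_chainSet {σ : Equiv.Perm (Fin (m + 1))} {α : Fin (m + 1) → ℕ}
    {c : (ℓ : ℕ) → Fin ℓ → ℕ} (hc : c ∈ ChainSet (m + 1) σ α) :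
    truncChain m c ∈ ChainSet m (delPerm σ) (c m) := by
  refine ⟨fun i => by rw [truncChain_of_le le_rfl], fun ℓ hℓ i => ?_, fun ℓ hℓ => ?_⟩
  · rw [truncChain_of_lt hℓ, Pi.zero_apply]
  · rw [truncChain_of_le (by omega), truncChain_of_le hℓ,
      ← permCongr_sigmaAt_delPerm σ hℓ (Nat.sub_sub_self (by omega))]
    exact hc.2.2 ℓ (by omega)

lemma update_mem_chainSet {σ : Equiv.Perm (Fin (m + 1))} {α : Fin (m + 1) → ℕ}
    {b : Fin m → ℕ} {c : (ℓ : ℕ) → Fin ℓ → ℕ} (hb : CovStep σ b α)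
    (hc : c ∈ ChainSet m (delPerm σ) b) :
    Function.update c (m + 1) α ∈ ChainSet (m + 1) σ α := by
  refine ⟨fun i => by rw [Function.update_self], fun ℓ hℓ i => ?_, fun ℓ hℓ => ?_⟩
  · rw [Function.update_of_ne (by omega)]
    exact hc.2.1 ℓ (by omega) i
  · rcases Nat.lt_or_ge ℓ m with hℓm | hℓm
    · rw [Function.update_of_ne (by omega), Function.update_of_ne (by omega),
        permCongr_sigmaAt_delPerm σ hℓm _ (Nat.sub_sub_self hℓm)]
      exact hc.2.2 ℓ hℓm
    · obtain rfl : ℓ = m := by omega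
      rw [Function.update_self, Function.update_of_ne (by omega), permCongr_sigmaAt_sub_self,
        show c ℓ = b from funext hc.1]
      exact hb

theorem chainSet_bijOn (σ : Equiv.Perm (Fin (m + 1))) (α : Fin (m + 1) → ℕ) :
    Set.BijOn (fun c => (c m, truncChain m c)) (ChainSet (m + 1) σ α)
      {q | q.1 ∈ {b | CovStep σ b α} ∧ q.2 ∈ ChainSet m (delPerm σ) q.1} := by
  refine Set.InvOn.bijOn (f' := fun q => Function.update q.2 (m + 1) α)
    ⟨fun c hc => ?_, fun q hq => ?_⟩
    (fun c hc => ⟨covStep_of_mem_chainSet hc, truncChain_mem_chainSet hc⟩)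
    (fun q hq => update_mem_chainSet hq.1 hq.2)
  · funext ℓ
    dsimp only
    rcases eq_or_ne ℓ (m + 1) with rfl | hℓ
    · rw [Function.update_self]
      exact (funext hc.1).symm
    · rw [Function.update_of_ne hℓ]
      rcases le_or_gt ℓ m with hℓm | hℓm
      · exact truncChain_of_le hℓm
      · rw [truncChain_of_lt hℓm]
        exact (funext (hc.2.1 ℓ (by omega))).symm
  · obtain ⟨b, c⟩ := q
    refine Prod.ext ((Function.update_of_ne (by omega) _ _).trans (funext hq.2.1)) ?_
    funext ℓ
    dsimp only
    rcases le_or_gt ℓ m with hℓm | hℓm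
    · rw [truncChain_of_le hℓm, Function.update_of_ne (by omega)]
    · rw [truncChain_of_lt hℓm]
      exact (funext (hq.2.2.1 ℓ hℓm)).symm

lemma chainSet_zero (σ : Equiv.Perm (Fin 0)) (α : Fin 0 → ℕ) : ChainSet 0 σ α = {0} := by
  refine Set.eq_singleton_iff_unique_mem.2 ⟨⟨finZeroElim, fun _ _ _ => rfl,
    fun ℓ hℓ => absurd hℓ (by omega)⟩, fun c hc => ?_⟩
  funext ℓ i
  rcases Nat.eq_zero_or_pos ℓ with rfl | hℓ
  · exact i.elim0
  · exact hc.2.1 ℓ hℓ i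

theorem chainSet_finite : ∀ (n : ℕ) (σ : Equiv.Perm (Fin n)) (α : Fin n → ℕ),
    (ChainSet n σ α).Finite
  | 0, σ, α => chainSet_zero σ α ▸ Set.finite_singleton 0
  | m + 1, σ, α => finite_of_bijOn_fibrePairs (chainSet_bijOn σ α) (covStep_finite σ α)
      fun b => chainSet_finite m (delPerm σ) b

def chainWeight {M : Type*} [CommMonoid M] (n : ℕ) (x : ℕ → M) (c : (ℓ : ℕ) → Fin ℓ → ℕ) : M :=
  ∏ i ∈ range n, x (i + 1) ^ ((∑ j, c (n - i) j) - ∑ j, c (n - i - 1) j)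

lemma chainWeight_succ {M : Type*} [CommMonoid M] (x : ℕ → M) (c : (ℓ : ℕ) → Fin ℓ → ℕ) :
    chainWeight (m + 1) x c =
      x 1 ^ (∑ j, c (m + 1) j - ∑ j, c m j) * chainWeight m (fun k => x (k + 1)) c := by
  rw [chainWeight, prod_range_succ', mul_comm, Nat.sub_zero, Nat.add_sub_cancel, chainWeight]
  congr 1
  refine prod_congr rfl fun k _ => ?_
  rw [Nat.add_sub_add_right]

lemma chainWeight_truncChain {M : Type*} [CommMonoid M] (x : ℕ → M)
    (c : (ℓ : ℕ) → Fin ℓ → ℕ) : chainWeight m x (truncChain m c) = chainWeight m x c := by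
  refine prod_congr rfl fun i _ => ?_
  rw [truncChain_of_le (Nat.sub_le m i),
    truncChain_of_le ((Nat.sub_le _ 1).trans (Nat.sub_le m i))]

theorem finsum_chainWeight_succ {M : Type*} [CommSemiring M] (σ : Equiv.Perm (Fin (m + 1)))
    (α : Fin (m + 1) → ℕ) (x : ℕ → M) :
    ∑ᶠ c ∈ ChainSet (m + 1) σ α, chainWeight (m + 1) x c =
      ∑ᶠ b ∈ {b | CovStep σ b α}, x 1 ^ (∑ i, α i - ∑ i, b i) *
        ∑ᶠ c ∈ ChainSet m (delPerm σ) b, chainWeight m (fun k => x (k + 1)) c := by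
  refine finsum_mem_eq_finsum_mem_mul_finsum_mem (chainSet_bijOn σ α) (covStep_finite σ α)
    (fun b => chainSet_finite m (delPerm σ) b) (u := fun b => x 1 ^ (∑ i, α i - ∑ i, b i))
    (v := fun _ c => chainWeight m (fun k => x (k + 1)) c) fun c hc => ?_
  simp only [chainWeight_succ, chainWeight_truncChain, funext hc.1]

theorem finsum_chainWeight_zero {M : Type*} [CommSemiring M] (σ : Equiv.Perm (Fin 0))
    (α : Fin 0 → ℕ) (x : ℕ → M) :
    ∑ᶠ c ∈ ChainSet 0 σ α, chainWeight 0 x c = 1 := by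
  simp [chainSet_zero, chainWeight]

end Chains

theorem stmt14 (n : ℕ) (σ : Equiv.Perm (Fin n)) (α : Fin n → ℕ) (x : ℕ → ℝ) :
    atomSum n α σ x =
      ∑ᶠ c ∈ ChainSet n σ α,
        ∏ i ∈ Finset.range n,
          x (i + 1) ^ ((∑ j, c (n - i) j) - ∑ j, c (n - i - 1) j) := by
  change atomSum n α σ x = ∑ᶠ c ∈ ChainSet n σ α, chainWeight n x c
  induction n generalizing x with
  | zero => rw [atomSum_zero, finsum_chainWeight_zero]
  | succ m ih =>
    rw [atomSum_succ, finsum_chainWeight_succ]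
    exact finsum_mem_congr rfl fun b _ => by rw [ih]
end
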